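/- Let i ∈ ℕ and let k > i be an integer; fix a₁,…,a_k ∈ Σ with a_j ≠ a_{j+1} for all 1 ≤ j < k, let S = {a₁,…,a_k}, and let P↗(α), P↘(α) for α ∈ S be the up and down projectors of A[a₁,…,a_k], with P↗(c) = P↘(c) := I for c ∈ Σ∖S. Let w = w₁⋯w_n ∈ L[a₁,…,a_i] ∖ L[a₁,…,a_{i+1}] (where L[a₁,…,a₀] := Σ*). Then for every choice d₁,…,d_n ∈ {↗, ↘} and every integer m with i+2 ≤ m ≤ k+1, the m-th coordinate of e₁ · P_{d₁}(w₁) ⋯ P_{d_n}(w_n) equals 0. -/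

import Mathlib

/-- The "up" orthogonal projector `P↗(α)` of dimension `(k+1)×(k+1)` associated with
the word `as = a₁⋯a_k` and the letter `α`: writing `j₁^{(α)} < ⋯ < j_{#α}^{(α)}` for
the (1-based) positions of `α` in `as`, the entry `(r,s)` is `1` if `r = s` and `r`
belongs to no block `{jᵢ^{(α)}, jᵢ^{(α)}+1}`, `1/2` if `r` and `s` belong to a common
block `{jᵢ^{(α)}, jᵢ^{(α)}+1}`, and `0` otherwise.  (Indices here are 0-based: the
block of a 0-based position `q` with `as.get q = α` is `{q, q+1}`.) -/
noncomputable def upProj {σ : Type} [DecidableEq σ] (as : List σ) (α : σ) :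
    Matrix (Fin (as.length + 1)) (Fin (as.length + 1)) ℝ :=
  Matrix.of fun r s =>
    if ∃ q : Fin as.length, as.get q = α ∧
        (r = q.castSucc ∨ r = q.succ) ∧ (s = q.castSucc ∨ s = q.succ) then 1 / 2
    else if r = s then 1 else 0

/-- The "down" orthogonal projector `P↘(α)` of dimension `(k+1)×(k+1)` associated
with the word `as = a₁⋯a_k` and the letter `α`: the entry `(r,s)` is `1/2` if
`r = s` and `r` belongs to some block `{jᵢ^{(α)}, jᵢ^{(α)}+1}`, `-1/2` if `r ≠ s` and
`r, s` belong to a common block, and `0` otherwise. -/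
noncomputable def downProj {σ : Type} [DecidableEq σ] (as : List σ) (α : σ) :
    Matrix (Fin (as.length + 1)) (Fin (as.length + 1)) ℝ :=
  Matrix.of fun r s =>
    if ∃ q : Fin as.length, as.get q = α ∧
        (r = q.castSucc ∨ r = q.succ) ∧ (s = q.castSucc ∨ s = q.succ) then
      (if r = s then 1 / 2 else -(1 / 2))
    else 0

/-- The first standard basis row vector `e₁ ∈ ℝ^{1×(k+1)}`. -/
noncomputable def e1 {n : ℕ} : Matrix (Fin 1) (Fin (n + 1)) ℝ :=
  Matrix.of fun _ i => if i = 0 then 1 else 0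

/-- The projector associated with a letter `c` and a direction `d`
(`true` = up `↗`, `false` = down `↘`), with `P↗(c) = P↘(c) = I` for letters `c` not
occurring in `as`. -/
noncomputable def dirProj {σ : Type} [DecidableEq σ] (as : List σ) (d : Bool) (c : σ) :
    Matrix (Fin (as.length + 1)) (Fin (as.length + 1)) ℝ :=
  if c ∈ as then (if d then upProj as c else downProj as c) else 1

/-- `e₁ · P_{d₁}(w₁) ⋯ P_{d_n}(w_n)` : the row vector obtained from `e₁` by applying,
for each position `p` of the word `w`, the up or down projector of the letter `w_p`
according to the choice of directions `d`. -/
noncomputable def dirState {σ : Type} [DecidableEq σ] (as : List σ) (w : List σ)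
    (d : Fin w.length → Bool) : Matrix (Fin 1) (Fin (as.length + 1)) ℝ :=
  e1 * (List.ofFn fun p : Fin w.length => dirProj as (d p) (w.get p)).prod

/-!
Every projector `P_d(c)` is diagonal except on the blocks `{q, q+1}` with `a_{q+1} = c`
(0-based rows `q`). Hence if a row vector vanishes beyond coordinate `m`, multiplying it by
`P_d(c)` keeps it vanishing beyond `m` unless `c = a_{m+1}`, in which case the support grows by
at most one. Reading `w` letter by letter, the support can thus only advance along a greedy
embedding of `a₁a₂⋯` into `w`; since `a₁⋯a_{i+1}` does not embed, the support of
`e₁ · P_{d₁}(w₁) ⋯ P_{d_n}(w_n)` never passes coordinate `i` (0-based).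
-/

def VanishesAbove {n : ℕ} (v : Matrix (Fin 1) (Fin n) ℝ) (m : ℕ) : Prop :=
  ∀ t : Fin n, m < (t : ℕ) → v 0 t = 0

theorem VanishesAbove.mono {n : ℕ} {v : Matrix (Fin 1) (Fin n) ℝ} {m m' : ℕ}
    (hv : VanishesAbove v m) (hm : m ≤ m') : VanishesAbove v m' :=
  fun t ht => hv t (by omega)

theorem vanishesAbove_e1 {n : ℕ} : VanishesAbove (e1 : Matrix (Fin 1) (Fin (n + 1)) ℝ) 0 := by
  intro t ht
  simp only [e1, Matrix.of_apply, ite_eq_right_iff]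
  rintro rfl
  exact absurd ht (lt_irrefl 0)

section Projectors

variable {σ : Type} [DecidableEq σ] {as : List σ}

theorem dirProj_apply_eq_zero_of_lt (b : Bool) {c : σ} {r t : Fin (as.length + 1)}
    (hrt : r < t) (hblock : ¬ ((t : ℕ) = r + 1 ∧ as[(r : ℕ)]? = some c)) :
    dirProj as b c r t = 0 := by
  have hrt' : r ≠ t := hrt.ne
  have not_block : ¬ ∃ q : Fin as.length, as.get q = c ∧
      (r = q.castSucc ∨ r = q.succ) ∧ (t = q.castSucc ∨ t = q.succ) := by
    rintro ⟨q, hq, hr, ht⟩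
    have hrq : (r : ℕ) = q := by
      rcases hr with rfl | rfl <;> rcases ht with rfl | rfl <;> simp_all [Fin.lt_def]
    have htq : (t : ℕ) = q + 1 := by
      rcases ht with rfl | rfl <;> simp_all [Fin.lt_def]
    exact hblock ⟨by omega, by simp [hrq, ← hq]⟩
  unfold dirProj
  split_ifs
  · simp only [upProj, Matrix.of_apply, if_neg not_block, if_neg hrt']
  · simp only [downProj, Matrix.of_apply, if_neg not_block]
  · exact Matrix.one_apply_ne hrt'

theorem VanishesAbove.mul_dirProj_apply {v : Matrix (Fin 1) (Fin (as.length + 1)) ℝ} {m : ℕ}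
    (hv : VanishesAbove v m) (b : Bool) (c : σ) {t : Fin (as.length + 1)} (ht : m < (t : ℕ))
    (hblock : ¬ ((t : ℕ) = m + 1 ∧ as[m]? = some c)) :
    (v * dirProj as b c) 0 t = 0 := by
  rw [Matrix.mul_apply]
  refine Finset.sum_eq_zero fun r _ => ?_
  by_cases hr : m < (r : ℕ)
  · rw [hv r hr, zero_mul]
  · have hrt : r < t := by rw [Fin.lt_def]; omega
    rw [dirProj_apply_eq_zero_of_lt b hrt, mul_zero]
    rintro ⟨htr, hc⟩
    exact hblock ⟨by omega, by rwa [show (r : ℕ) = m by omega] at hc⟩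

theorem VanishesAbove.mul_dirProj {v : Matrix (Fin 1) (Fin (as.length + 1)) ℝ} {m : ℕ}
    (hv : VanishesAbove v m) (b : Bool) {c : σ} (hc : as[m]? ≠ some c) :
    VanishesAbove (v * dirProj as b c) m :=
  fun _ ht => hv.mul_dirProj_apply b c ht fun h => hc h.2

theorem VanishesAbove.mul_dirProj_succ {v : Matrix (Fin 1) (Fin (as.length + 1)) ℝ} {m : ℕ}
    (hv : VanishesAbove v m) (b : Bool) (c : σ) :
    VanishesAbove (v * dirProj as b c) (m + 1) :=
  fun _ ht => hv.mul_dirProj_apply b c (by omega) fun h => by omega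

theorem VanishesAbove.mul_prod_dirProj {v : Matrix (Fin 1) (Fin (as.length + 1)) ℝ} {m : ℕ}
    (hv : VanishesAbove v m) (wp : List (σ × Bool)) {j : ℕ}
    (hns : ¬ ((as.drop m).take (j + 1)).Sublist (wp.map Prod.fst)) :
    VanishesAbove (v * (wp.map fun x => dirProj as x.2 x.1).prod) (m + j) := by
  induction wp generalizing v m j with
  | nil => simpa using hv.mono (Nat.le_add_right m j)
  | cons cb wp ih =>
    obtain ⟨c, b⟩ := cb
    rw [List.map_cons, List.prod_cons, ← Matrix.mul_assoc]
    rw [List.map_cons] at hns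
    by_cases hc : as[m]? = some c
    · have hdrop : as.drop m = c :: as.drop (m + 1) := by
        obtain ⟨hm, rfl⟩ := List.getElem?_eq_some_iff.mp hc
        exact List.drop_eq_getElem_cons hm
      rw [hdrop] at hns
      obtain _ | j := j
      · exact absurd ((List.nil_sublist _).cons_cons c) hns
      · have hns' : ¬ ((as.drop (m + 1)).take (j + 1)).Sublist (wp.map Prod.fst) :=
          fun h => hns (by simpa [List.take_succ_cons] using h.cons_cons c)
        simpa [Nat.add_right_comm, Nat.add_assoc] using
          ih (hv.mul_dirProj_succ b c) hns'
    · exact ih (hv.mul_dirProj b hc) fun h => hns (h.cons c)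

theorem dirState_eq_e1_mul_prod (w : List σ) (d : Fin w.length → Bool) :
    dirState as w d =
      e1 * ((List.ofFn fun p => (w.get p, d p)).map fun x => dirProj as x.2 x.1).prod := by
  rw [List.map_ofFn]
  rfl

end Projectors

theorem dir_state_vanishing_coordinates_general
    (σ : Type) [DecidableEq σ] (i : ℕ) (as : List σ) (w : List σ)
    (hw₂ : ¬ (as.take (i + 1)).Sublist w) :
    ∀ (d : Fin w.length → Bool) (t : Fin (as.length + 1)),
      i + 1 ≤ (t : ℕ) → dirState as w d 0 t = 0 := by
  intro d t ht
  have hfst : (List.ofFn fun p => (w.get p, d p)).map Prod.fst = w := by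
    simp [List.map_ofFn, Function.comp_def]
  have hvanish := vanishesAbove_e1.mul_prod_dirProj (as := as) (j := i)
    (List.ofFn fun p => (w.get p, d p)) (by rwa [hfst, List.drop_zero])
  rw [dirState_eq_e1_mul_prod]
  exact hvanish t (by omega)

/-- Let `i ∈ ℕ` and `k > i`; fix `a₁,…,a_k` with `aⱼ ≠ aⱼ₊₁`.  If
`w ∈ L[a₁,…,a_i] ∖ L[a₁,…,a_{i+1}]` (with `L[a₁,…,a₀] = Σ*`), then for every choice
of directions `d₁,…,d_n ∈ {↗,↘}` and every coordinate index `m` with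
`i+2 ≤ m ≤ k+1` (1-based; 0-based: `m ≥ i+1`), the `m`-th coordinate of
`e₁ · P_{d₁}(w₁) ⋯ P_{d_n}(w_n)` is `0`. -/
theorem dir_state_vanishing_coordinates
    (σ : Type) [DecidableEq σ] (i : ℕ) (as : List σ) (hik : i < as.length)
    (hchain : as.Chain' (· ≠ ·)) (w : List σ)
    (hw₁ : (as.take i).Sublist w) (hw₂ : ¬ (as.take (i + 1)).Sublist w) :
    ∀ (d : Fin w.length → Bool) (t : Fin (as.length + 1)),
      i + 1 ≤ (t : ℕ) → dirState as w d 0 t = 0 :=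
  dir_state_vanishing_coordinates_general σ i as w hw₂
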